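/- arXiv:2110.10204 — 7 statements merged into one kernel-verified Lean document; each statement's English description precedes it below -/
import Mathlib

section
/- Let P = {x ∈ ℝ^d : A x ≤ b} be a rational d-polytope with A ∈ ℤ^{n×d}, b ∈ ℤ^n, and let r be the least common multiple of the nonzero entries of b. Then for any integer n ≥ 0 and any two real numbers λ, ω with n/r < λ ≤ ω < (n+1)/r, the sets of lattice points λP ∩ ℤ^d and ωP ∩ ℤ^d are equal. -/
/-- Let `P = {x : A x ≤ b}` be a rational polytope given by an irredundant integral
halfspace description (each row of `(A|b)` has gcd 1), and let `r` be the lcm of the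
nonzero entries of `b` (the codenominator). Then for any `m ∈ ℤ≥0` and real
`m/r < λ ≤ ω < (m+1)/r`, the lattice point sets of `λP` and `ωP` coincide. -/
theorem stmt5 {d n : ℕ} (A : Matrix (Fin n) (Fin d) ℤ) (b : Fin n → ℤ)
    (hgcd : ∀ i, Int.gcd (Finset.univ.gcd (A i)) (b i) = 1)
    (r : ℤ) (hr : r = (Finset.univ.filter (fun i => b i ≠ 0)).lcm b) (hrpos : 0 < r)
    (m : ℕ) (lam om : ℝ)
    (h1 : (m : ℝ) / (r : ℝ) < lam) (h2 : lam ≤ om) (h3 : om < ((m : ℝ) + 1) / (r : ℝ)) :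
    {x : Fin d → ℤ | ∀ i, (∑ j, (A i j : ℝ) * (x j : ℝ)) ≤ lam * b i} =
      {x : Fin d → ℤ | ∀ i, (∑ j, (A i j : ℝ) * (x j : ℝ)) ≤ om * b i} := by
  have hbd : ∀ i, b i ≠ 0 → b i ∣ r := fun i hi =>
    hr ▸ Finset.dvd_lcm (Finset.mem_filter.mpr ⟨Finset.mem_univ i, hi⟩)
  have hrR : (0:ℝ) < (r:ℝ) := by exact_mod_cast hrpos
  have hml : (m:ℝ) < lam * r := (div_lt_iff₀ hrR).mp h1
  have hom : om * r < (m:ℝ) + 1 := (lt_div_iff₀ hrR).mp h3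
  have key : ∀ (s : ℤ) (i : Fin n), ((s:ℝ) ≤ lam * b i ↔ (s:ℝ) ≤ om * b i) := by
    intro s i
    rcases eq_or_ne (b i) 0 with hb0 | hb0
    · simp [hb0]
    · obtain ⟨t, ht⟩ := (hbd i hb0).mul_left s
      rcases lt_or_gt_of_ne hb0 with hneg | hpos
      · have hbRn : ((b i : ℤ) : ℝ) < 0 := by exact_mod_cast hneg
        constructor
        · intro hs
          by_contra hns
          push_neg at hns
          have e1 : (s:ℝ) * r < m * b i := by
            nlinarith [mul_le_mul_of_nonneg_right hs hrR.le]
          have e2 : ((m:ℝ)+1) * b i < s * r := by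
            nlinarith [mul_le_mul_of_nonneg_right hns.le hrR.le]
          have E1 : s * r < (m:ℤ) * b i := by exact_mod_cast e1
          have E2 : ((m:ℤ)+1) * b i < s * r := by exact_mod_cast e2
          rw [ht] at E1 E2
          have hm1 : (m:ℤ) < t := by nlinarith
          have hm2 : t < (m:ℤ) + 1 := by nlinarith
          omega
        · intro hs; nlinarith
      · have hbRp : (0:ℝ) < ((b i : ℤ) : ℝ) := by exact_mod_cast hpos
        constructor
        · intro hs; nlinarith
        · intro hs
          by_contra hns
          push_neg at hns
          have e1 : (m:ℝ) * b i < s * r := by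
            nlinarith [mul_le_mul_of_nonneg_right hns.le hrR.le]
          have e2 : (s:ℝ) * r < ((m:ℝ)+1) * b i := by
            nlinarith [mul_le_mul_of_nonneg_right hs hrR.le]
          have E1 : (m:ℤ) * b i < s * r := by exact_mod_cast e1
          have E2 : s * r < ((m:ℤ)+1) * b i := by exact_mod_cast e2
          rw [ht] at E1 E2
          have hm1 : (m:ℤ) < t := by nlinarith
          have hm2 : t < (m:ℤ) + 1 := by nlinarith
          omega
  ext x
  simp only [Set.mem_setOf_eq]
  have hx : ∀ i, ((∑ j, A i j * x j : ℤ) : ℝ) = ∑ j, (A i j : ℝ) * (x j : ℝ) := by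
    intro i; push_cast; ring
  constructor
  · intro h i
    have := (key (∑ j, A i j * x j) i).mp (by rw [hx]; exact h i)
    rwa [hx] at this
  · intro h i
    have := (key (∑ j, A i j * x j) i).mpr (by rw [hx]; exact h i)
    rwa [hx] at this
end

section
/- Let P = {x ∈ ℝ^d : A x ≤ b} be a rational d-polytope with 0 ∈ P (so b ≥ 0 componentwise), A ∈ ℤ^{n×d}, b ∈ ℤ^n, and let r = lcm of the nonzero entries of b. Then for any integer n ≥ 0 and any real numbers λ, ω with n/r ≤ λ ≤ ω < (n+1)/r, the sets λP ∩ ℤ^d and ωP ∩ ℤ^d are equal; i.e., the lattice point count is constant on each half-open interval [n/r, (n+1)/r). -/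
/-- Same setup as the codenominator proposition, with the extra hypothesis `0 ∈ P`
(so `b ≥ 0` componentwise). Then the lattice point set of `λP` is constant on each
half-open interval `[m/r, (m+1)/r)`. -/
theorem stmt6 {d n : ℕ} (A : Matrix (Fin n) (Fin d) ℤ) (b : Fin n → ℤ)
    (hgcd : ∀ i, Int.gcd (Finset.univ.gcd (A i)) (b i) = 1)
    (hb : ∀ i, 0 ≤ b i)
    (r : ℤ) (hr : r = (Finset.univ.filter (fun i => b i ≠ 0)).lcm b) (hrpos : 0 < r)
    (m : ℕ) (lam om : ℝ)
    (h1 : (m : ℝ) / (r : ℝ) ≤ lam) (h2 : lam ≤ om) (h3 : om < ((m : ℝ) + 1) / (r : ℝ)) :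
    {x : Fin d → ℤ | ∀ i, (∑ j, (A i j : ℝ) * (x j : ℝ)) ≤ lam * b i} =
      {x : Fin d → ℤ | ∀ i, (∑ j, (A i j : ℝ) * (x j : ℝ)) ≤ om * b i} := by
  have hrR : (0:ℝ) < (r:ℝ) := by exact_mod_cast hrpos
  ext x
  simp only [Set.mem_setOf_eq]
  constructor
  · intro h i
    exact (h i).trans (mul_le_mul_of_nonneg_right h2 (by exact_mod_cast hb i))
  · intro h i
    rcases eq_or_lt_of_le (hb i) with h0 | h0
    · have hs := h i
      rw [← h0] at hs ⊢
      simpa using hs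
    · by_contra hlt
      push_neg at hlt
      have hs := h i
      have hbR : (0:ℝ) < (b i : ℝ) := by exact_mod_cast h0
      have hdvd : b i ∣ r := by
        rw [hr]
        exact Finset.dvd_lcm (Finset.mem_filter.mpr ⟨Finset.mem_univ i, h0.ne'⟩)
      obtain ⟨k, hk⟩ := hdvd
      set s : ℤ := ∑ j, A i j * x j with hsdef
      have hscast : (∑ j, (A i j : ℝ) * (x j : ℝ)) = (s : ℝ) := by
        rw [hsdef]; push_cast; ring
      rw [hscast] at hlt hs
      have hkR : (r:ℝ) = (b i : ℝ) * (k : ℝ) := by exact_mod_cast hk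
      -- m < s*k
      have hml : (m:ℝ) ≤ lam * r := (div_le_iff₀ hrR).mp h1
      have h4 : (m:ℝ) * b i < (s:ℝ) * r := by nlinarith
      have h5 : (m:ℝ) < (s:ℝ) * k := by
        rw [hkR] at h4; nlinarith
      -- s*k < m+1
      have hmu : om * r < (m:ℝ) + 1 := (lt_div_iff₀ hrR).mp h3
      have h6 : (s:ℝ) * r < ((m:ℝ) + 1) * b i := by nlinarith
      have h7 : (s:ℝ) * k < (m:ℝ) + 1 := by
        rw [hkR] at h6; nlinarith
      have h5' : (m:ℤ) < s * k := by exact_mod_cast h5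
      have h7' : s * k < (m:ℤ) + 1 := by exact_mod_cast h7
      omega
end

section
/- Let P ⊆ ℝ^d be a rational d-polytope with codenominator r and 0 ∈ P. For any real λ ≥ 0, the number of lattice points in λP equals the number of lattice points in (⌊rλ⌋/r)·P. -/
/-- For a rational polytope `P = {x : A x ≤ b}` with `0 ∈ P` (so `b ≥ 0`), codenominator
`r = lcm` of the nonzero entries of `b`, and any real `λ ≥ 0`, the number of lattice
points in `λP` equals the number of lattice points in `(⌊rλ⌋/r)·P`. -/
theorem stmt7 {d n : ℕ} (A : Matrix (Fin n) (Fin d) ℤ) (b : Fin n → ℤ)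
    (hgcd : ∀ i, Int.gcd (Finset.univ.gcd (A i)) (b i) = 1)
    (hb : ∀ i, 0 ≤ b i)
    (r : ℤ) (hr : r = (Finset.univ.filter (fun i => b i ≠ 0)).lcm b) (hrpos : 0 < r)
    (lam : ℝ) (hlam : 0 ≤ lam) :
    {x : Fin d → ℤ | ∀ i, (∑ j, (A i j : ℝ) * (x j : ℝ)) ≤ lam * b i}.ncard =
      {x : Fin d → ℤ | ∀ i,
        (∑ j, (A i j : ℝ) * (x j : ℝ)) ≤ ((⌊(r : ℝ) * lam⌋ : ℝ) / (r : ℝ)) * b i}.ncard := by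
  have hrR : (0:ℝ) < (r:ℝ) := by exact_mod_cast hrpos
  have hfloor : ((⌊(r:ℝ) * lam⌋ : ℤ) : ℝ) ≤ (r:ℝ) * lam := Int.floor_le _
  congr 1
  ext x
  simp only [Set.mem_setOf_eq]
  constructor
  · intro h i
    have hi := h i
    have hs : (∑ j, (A i j : ℝ) * (x j : ℝ)) = ((∑ j, A i j * x j : ℤ) : ℝ) := by
      push_cast; ring
    set s : ℤ := ∑ j, A i j * x j with hsdef
    rw [hs] at hi ⊢
    by_cases hbi : b i = 0
    · simpa [hbi] using hi
    · have hdvd : b i ∣ r := hr ▸ Finset.dvd_lcm (by simp [hbi])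
      obtain ⟨m, hm⟩ := hdvd
      have hbpos : 0 < b i := lt_of_le_of_ne (hb i) (Ne.symm hbi)
      have hmpos : 0 < m := by nlinarith [hrpos]
      have hbR : (0:ℝ) < (b i : ℝ) := by exact_mod_cast hbpos
      have hmR : (0:ℝ) < (m : ℝ) := by exact_mod_cast hmpos
      have hmr : (r:ℝ) = (b i : ℝ) * (m : ℝ) := by exact_mod_cast hm
      have h1 : ((s * m : ℤ) : ℝ) ≤ (r:ℝ) * lam := by
        push_cast
        nlinarith [hi]
      have h2 : (s * m : ℤ) ≤ ⌊(r:ℝ) * lam⌋ := Int.le_floor.mpr h1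
      have h2R : ((s:ℝ)) * (m:ℝ) ≤ ((⌊(r:ℝ) * lam⌋ : ℤ) : ℝ) := by exact_mod_cast h2
      rw [div_mul_eq_mul_div, le_div_iff₀ hrR]
      have key : (s:ℝ) * (r:ℝ) = (s:ℝ) * (m:ℝ) * (b i : ℝ) := by rw [hmr]; ring
      have := mul_le_mul_of_nonneg_right h2R hbR.le
      linarith
  · intro h i
    have hi := h i
    have hle : ((⌊(r:ℝ) * lam⌋ : ℝ) / (r:ℝ)) * (b i : ℝ) ≤ lam * (b i : ℝ) := by
      have hbR : (0:ℝ) ≤ (b i : ℝ) := by exact_mod_cast hb i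
      have : (⌊(r:ℝ) * lam⌋ : ℝ) / (r:ℝ) ≤ lam := by
        rw [div_le_iff₀ hrR]; linarith
      exact mul_le_mul_of_nonneg_right this hbR
    linarith
end

section
/- Let P ⊆ ℝ^d be a lattice d-polytope with codenominator r and 0 ∈ P. Then for every rational λ > 0, the number of lattice points in λP equals 1 plus the sum over ω ∈ (1/r)ℤ with 0 < ω ≤ λ of the number of lattice points on the part of the boundary of ωP lying on facets not containing the origin. -/
/-!
Let `D k` be the lattice points of `(k/r)P`. These sets increase with `k`, and `D 0 = {0}`
because a nonzero integer `x` with `A x ≤ 0` would put the whole ray `ℝ≥0 x` inside the bounded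
polytope `P`. Since every nonzero `b i` divides `r`, the quantities `(r / b i) (A x)_i` are
integers; hence the lattice points of `λP` are those of `(⌊rλ⌋/r)P`, and a point of `D k` not in
`D (k-1)` must attain `(A x)_i = (k/r) b_i` on some facet with `b i ≠ 0`, i.e. a facet of `(k/r)P`
not through the origin. Telescoping `|D ⌊rλ⌋| = |D 0| + ∑ |D k \ D (k-1)|` gives the formula.
-/

open Bornology Finset

theorem Monotone.ncard_eq_ncard_zero_add_sum_ncard_diff {α : Type*} {D : ℤ → Set α}
    (hD : Monotone D) {m : ℤ} (hm : 0 ≤ m) (hfin : (D m).Finite) :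
    (D m).ncard = (D 0).ncard + ∑ k ∈ Icc 1 m, (D k \ D (k - 1)).ncard := by
  induction m, hm using Int.leInduction with
  | base => simp
  | succ m hm ih =>
    have hsub : D m ⊆ D (m + 1) := hD (by omega)
    rw [← insert_Icc_right_eq_Icc_add_one (by omega), sum_insert (by simp), add_sub_cancel_right,
      ← Set.ncard_sdiff_add_ncard_of_subset hsub hfin, ih (hfin.subset hsub)]
    ring

theorem eq_zero_of_isBounded_of_forall_smul_mem {E : Type*} [NormedAddCommGroup E]
    [NormedSpace ℝ E] {s : Set E} (hs : IsBounded s) {v : E} (hv : ∀ t : ℝ, 0 ≤ t → t • v ∈ s) :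
    v = 0 := by
  obtain ⟨C, hC⟩ := isBounded_iff_forall_norm_le.mp hs
  by_contra hv0
  have hpos : 0 < ‖v‖ := norm_pos_iff.mpr hv0
  have hCv := hC _ (hv ((|C| + 1) / ‖v‖) (by positivity))
  rw [norm_smul, Real.norm_of_nonneg (by positivity), div_mul_cancel₀ _ hpos.ne'] at hCv
  linarith [le_abs_self C]

theorem finite_setOf_intCast_mem {ι : Type*} [Fintype ι] {K : Set (ι → ℝ)} (hK : IsBounded K) :
    {x : ι → ℤ | (fun j => (x j : ℝ)) ∈ K}.Finite :=
  (Metric.finite_isBounded_inter_isClosed .univ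
    ((Isometry.postcomp_pi Real.isometry_intCast).antilipschitz.isBounded_preimage hK)
    isClosed_univ).subset fun _ hx => ⟨hx, trivial⟩

theorem Int.cast_le_div_iff_le_floor_div {a q : ℤ} (hq : 0 < q) (t : ℚ) :
    (a : ℚ) ≤ t / q ↔ (a : ℚ) ≤ ⌊t⌋ / q := by
  have hq' : (0 : ℚ) < q := by exact_mod_cast hq
  rw [le_div_iff₀ hq', le_div_iff₀ hq', ← Int.cast_mul, Int.cast_le, Int.le_floor]

theorem Int.cast_eq_div_of_le_div_of_sub_one_div_lt {a q k : ℤ} (hq : 0 < q)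
    (hle : (a : ℚ) ≤ k / q) (hlt : ((k - 1 : ℤ) : ℚ) / q < a) : (a : ℚ) = k / q := by
  have hq' : (0 : ℚ) < q := by exact_mod_cast hq
  rw [le_div_iff₀ hq'] at hle
  rw [div_lt_iff₀ hq'] at hlt
  rw [eq_div_iff hq'.ne']
  have haq : a * q = k := by
    have h1 : a * q ≤ k := by exact_mod_cast hle
    have h2 : k - 1 < a * q := by exact_mod_cast hlt
    omega
  exact_mod_cast haq

namespace LatticePolytope

variable {m n : Type*} [Fintype n] (A : Matrix m n ℤ) (b : m → ℤ)

def realPolytope : Set (n → ℝ) := {x | ∀ i, ∑ j, (A i j : ℝ) * x j ≤ b i}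

def dilateLatticePoints (ω : ℚ) : Set (n → ℤ) :=
  {x | ∀ i, ∑ j, (A i j : ℚ) * (x j : ℚ) ≤ ω * b i}

-- The facets `∑ j, A i j * x j = ω * b i` with `b i ≠ 0` are those of `ωP` missing the origin.
def facetLatticePoints (ω : ℚ) : Set (n → ℤ) :=
  {x | x ∈ dilateLatticePoints A b ω ∧ ∃ i, b i ≠ 0 ∧ ∑ j, (A i j : ℚ) * (x j : ℚ) = ω * b i}

variable {A b}

theorem sum_mul_intCast_eq_intCast (i : m) (x : n → ℤ) {K : Type*} [Field K] :
    ∑ j, (A i j : K) * (x j : K) = ((∑ j, A i j * x j : ℤ) : K) := by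
  push_cast; rfl

theorem dilateLatticePoints_mono (hb : 0 ≤ b) : Monotone (dilateLatticePoints A b) :=
  fun _ _ hωω' _ hx i => (hx i).trans (mul_le_mul_of_nonneg_right hωω' (by exact_mod_cast hb i))

theorem dilateLatticePoints_finite (hP : IsBounded (realPolytope A b)) {ω : ℚ} (hω : 0 < ω) :
    (dilateLatticePoints A b ω).Finite := by
  have hω' : (0 : ℝ) < ω := by exact_mod_cast hω
  refine (finite_setOf_intCast_mem (hP.smul₀ (ω : ℝ))).subset fun x hx => ?_
  refine ⟨(ω : ℝ)⁻¹ • fun j => (x j : ℝ), fun i => ?_, by simp [smul_smul, hω'.ne']⟩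
  have hxi : ∑ j, (A i j : ℝ) * (x j : ℝ) ≤ ω * b i := by exact_mod_cast hx i
  simp only [Pi.smul_apply, smul_eq_mul, mul_left_comm _ (ω : ℝ)⁻¹, ← Finset.mul_sum]
  rwa [inv_mul_le_iff₀ hω']

theorem dilateLatticePoints_zero (hb : 0 ≤ b) (hP : IsBounded (realPolytope A b)) :
    dilateLatticePoints A b 0 = {0} := by
  ext x
  refine ⟨fun hx => ?_, fun hx i => by simp [Set.mem_singleton_iff.mp hx]⟩
  suffices hx0 : (fun j => (x j : ℝ)) = 0 by
    ext j; simpa using congrFun hx0 j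
  refine eq_zero_of_isBounded_of_forall_smul_mem hP fun t ht i => ?_
  have hxi : ∑ j, (A i j : ℝ) * (x j : ℝ) ≤ 0 := by
    have hxi := hx i
    rw [zero_mul] at hxi
    exact_mod_cast hxi
  simp only [Pi.smul_apply, smul_eq_mul, mul_left_comm _ t, ← Finset.mul_sum]
  exact (mul_nonpos_of_nonneg_of_nonpos ht hxi).trans (by exact_mod_cast hb i)

variable {r : ℤ}

theorem exists_div_mul_eq_div (hb : 0 ≤ b) (hbr : ∀ i, b i ≠ 0 → b i ∣ r) (hr : 0 < r)
    {i : m} (hi : b i ≠ 0) : ∃ q : ℤ, 0 < q ∧ ∀ t : ℚ, t / r * b i = t / q := by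
  obtain ⟨q, hq⟩ := hbr i hi
  have hbi : 0 < b i := (hb i).lt_of_ne' hi
  refine ⟨q, pos_of_mul_pos_right (hq ▸ hr) hbi.le, fun t => ?_⟩
  have : (b i : ℚ) ≠ 0 := by exact_mod_cast hi
  rw [hq]; push_cast; field_simp

theorem dilateLatticePoints_eq_floor (hb : 0 ≤ b) (hbr : ∀ i, b i ≠ 0 → b i ∣ r) (hr : 0 < r)
    (ω : ℚ) : dilateLatticePoints A b ω = dilateLatticePoints A b (⌊r * ω⌋ / r) := by
  have hr' : (r : ℚ) ≠ 0 := by exact_mod_cast hr.ne'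
  ext x
  refine forall_congr' fun i => ?_
  rcases eq_or_ne (b i) 0 with hi | hi
  · simp [hi]
  obtain ⟨q, hq, hbq⟩ := exists_div_mul_eq_div hb hbr hr hi
  have hω : ω * b i = r * ω / r * b i := by rw [mul_div_cancel_left₀ _ hr']
  rw [sum_mul_intCast_eq_intCast, hω, hbq, hbq]
  exact Int.cast_le_div_iff_le_floor_div hq _

theorem dilateLatticePoints_sdiff (hb : 0 ≤ b) (hbr : ∀ i, b i ≠ 0 → b i ∣ r) (hr : 0 < r)
    (k : ℤ) :
    dilateLatticePoints A b (k / r) \ dilateLatticePoints A b ((k - 1 : ℤ) / r) =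
      facetLatticePoints A b (k / r) := by
  ext x
  constructor
  · rintro ⟨hxk, hxk'⟩
    obtain ⟨i, hi⟩ : ∃ i, ((k - 1 : ℤ) : ℚ) / r * b i < ∑ j, (A i j : ℚ) * (x j : ℚ) := by
      simpa [dilateLatticePoints] using hxk'
    have hbi : b i ≠ 0 := by
      rintro hbi
      have hxki := hxk i
      simp only [hbi, Int.cast_zero, mul_zero] at hi hxki
      exact hi.not_ge hxki
    obtain ⟨q, hq, hbq⟩ := exists_div_mul_eq_div hb hbr hr hbi
    refine ⟨hxk, i, hbi, ?_⟩
    have hxki := hxk i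
    rw [sum_mul_intCast_eq_intCast, hbq] at hxki hi ⊢
    exact Int.cast_eq_div_of_le_div_of_sub_one_div_lt hq hxki hi
  · rintro ⟨hxk, i, hbi, hxi⟩
    refine ⟨hxk, fun hxk' => ?_⟩
    obtain ⟨q, hq, hbq⟩ := exists_div_mul_eq_div hb hbr hr hbi
    have hxki := hxk' i
    rw [hxi, hbq, hbq, div_le_div_iff_of_pos_right (by exact_mod_cast hq)] at hxki
    push_cast at hxki
    linarith

end LatticePolytope

open LatticePolytope in
theorem stmt9_general {d n : ℕ} (A : Matrix (Fin n) (Fin d) ℤ) (b : Fin n → ℤ)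
    (hb : ∀ i, 0 ≤ b i)
    (V : Finset (Fin d → ℤ))
    (hlat : {x : Fin d → ℝ | ∀ i, (∑ j, (A i j : ℝ) * x j) ≤ b i}
      = convexHull ℝ ((fun (v : Fin d → ℤ) (j : Fin d) => ((v j : ℤ) : ℝ)) '' (V : Set (Fin d → ℤ))))
    (r : ℤ) (hr : r = (Finset.univ.filter (fun i => b i ≠ 0)).lcm b) (hrpos : 0 < r)
    (lam : ℚ) (hlam : 0 < lam) :
    {x : Fin d → ℤ | ∀ i, (∑ j, (A i j : ℚ) * (x j : ℚ)) ≤ (lam : ℚ) * b i}.ncard =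
      1 + ∑ k ∈ Finset.Icc (1 : ℤ) ⌊(r : ℚ) * lam⌋,
        {x : Fin d → ℤ |
            (∀ i, (∑ j, (A i j : ℚ) * (x j : ℚ)) ≤ ((k : ℚ) / (r : ℚ)) * b i) ∧
            ∃ i, b i ≠ 0 ∧ (∑ j, (A i j : ℚ) * (x j : ℚ)) = ((k : ℚ) / (r : ℚ)) * b i}.ncard := by
  have hbr : ∀ i, b i ≠ 0 → b i ∣ r := fun i hi => hr ▸ Finset.dvd_lcm (by simp [hi])
  have hP : IsBounded (realPolytope A b) := by
    rw [realPolytope, hlat]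
    exact isBounded_convexHull.mpr (V.finite_toSet.image _).isBounded
  set D : ℤ → Set (Fin d → ℤ) := fun k => dilateLatticePoints A b (k / r)
  have hD : Monotone D := (dilateLatticePoints_mono hb).comp fun k k' hkk' =>
    div_le_div_of_nonneg_right (by exact_mod_cast hkk') (by exact_mod_cast hrpos.le)
  have hlamD : dilateLatticePoints A b lam = D ⌊r * lam⌋ :=
    dilateLatticePoints_eq_floor hb hbr hrpos lam
  have hm : 0 ≤ ⌊(r : ℚ) * lam⌋ := Int.floor_nonneg.mpr (by positivity)
  change (dilateLatticePoints A b lam).ncard =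
    1 + ∑ k ∈ Finset.Icc (1 : ℤ) ⌊(r : ℚ) * lam⌋, (facetLatticePoints A b (k / r)).ncard
  rw [hlamD, hD.ncard_eq_ncard_zero_add_sum_ncard_diff hm
    (hlamD ▸ dilateLatticePoints_finite hP hlam)]
  simp only [D, Int.cast_zero, zero_div, dilateLatticePoints_zero hb hP, Set.ncard_singleton,
    dilateLatticePoints_sdiff hb hbr hrpos]

/-- For a lattice polytope `P = {x : A x ≤ b}` with `0 ∈ P` (so `b ≥ 0`) and codenominator
`r`, and any rational `λ > 0`, the number of lattice points of `λP` equals `1` plus the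
sum, over `ω = k/r` with `k ∈ ℤ`, `0 < k/r ≤ λ`, of the number of lattice points lying on
the facets of `ωP` not containing the origin. -/
theorem stmt9 {d n : ℕ} (A : Matrix (Fin n) (Fin d) ℤ) (b : Fin n → ℤ)
    (hgcd : ∀ i, Int.gcd (Finset.univ.gcd (A i)) (b i) = 1)
    (hb : ∀ i, 0 ≤ b i)
    (V : Finset (Fin d → ℤ))
    (hlat : {x : Fin d → ℝ | ∀ i, (∑ j, (A i j : ℝ) * x j) ≤ b i}
      = convexHull ℝ ((fun (v : Fin d → ℤ) (j : Fin d) => ((v j : ℤ) : ℝ)) '' (V : Set (Fin d → ℤ))))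
    (r : ℤ) (hr : r = (Finset.univ.filter (fun i => b i ≠ 0)).lcm b) (hrpos : 0 < r)
    (lam : ℚ) (hlam : 0 < lam) :
    {x : Fin d → ℤ | ∀ i, (∑ j, (A i j : ℚ) * (x j : ℚ)) ≤ (lam : ℚ) * b i}.ncard =
      1 + ∑ k ∈ Finset.Icc (1 : ℤ) ⌊(r : ℚ) * lam⌋,
        {x : Fin d → ℤ |
            (∀ i, (∑ j, (A i j : ℚ) * (x j : ℚ)) ≤ ((k : ℚ) / (r : ℚ)) * b i) ∧
            ∃ i, b i ≠ 0 ∧ (∑ j, (A i j : ℚ) * (x j : ℚ)) = ((k : ℚ) / (r : ℚ)) * b i}.ncard :=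
  stmt9_general A b hb V hlat r hr hrpos lam hlam
end

section
/- For the triangle Δ = conv{(0,0), (1, (p-1)/p), (p, 0)} with integer p ≥ 2, the number of lattice points in nΔ for a positive integer n is ((p-1)/2)n² + ((p+1)/2)n + 1; in particular the Ehrhart counting function is a polynomial in n even though Δ has denominator p. -/
/-!
Write `nΔ` by the inequalities `0 ≤ y`, `p y ≤ (p - 1) x`, `x + p y ≤ n p` and compare it column
by column with the lattice triangle `T = conv{(0, 0), (n p, 0), (0, n)}`. Column `x = a` of `T`
holds `⌊(n p - a) / p⌋ + 1` lattice points. For `a ≥ n` the columns of `nΔ` and `T` agree, and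
for `a ≤ n` column `a` of `nΔ` has exactly `n - a` points fewer, because
`n p - a = (p a - a) + p (n - a)`. Summing `⌊c / p⌋` over blocks of length `p` counts `T`, and
subtracting `∑ (n - a) = n (n + 1) / 2` leaves a polynomial in `n`.
-/

open Pointwise Finset

theorem mem_convexHull_triangle {p : ℝ} (hp : 1 < p) {y : Fin 2 → ℝ} :
    y ∈ convexHull ℝ ({![0, 0], ![1, (p - 1) / p], ![p, 0]} : Set (Fin 2 → ℝ)) ↔
      0 ≤ y 1 ∧ p * y 1 ≤ (p - 1) * y 0 ∧ y 0 + p * y 1 ≤ p := by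
  have hp₀ : 0 < p := by linarith
  have hp₁ : 0 < p - 1 := by linarith
  constructor
  · refine fun hy ↦ convexHull_min
      (t := {z : Fin 2 → ℝ | 0 ≤ z 1 ∧ p * z 1 ≤ (p - 1) * z 0 ∧ z 0 + p * z 1 ≤ p}) ?_ ?_ hy
    · have hmid : p * ((p - 1) / p) = p - 1 := mul_div_cancel₀ _ hp₀.ne'
      rintro z (rfl | rfl | rfl) <;>
        simp only [Set.mem_ofPred_eq, Matrix.cons_val_zero, Matrix.cons_val_one, hmid] <;>
        exact ⟨by positivity, by nlinarith, by nlinarith⟩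
    · rintro u ⟨hu₁, hu₂, hu₃⟩ v ⟨hv₁, hv₂, hv₃⟩ a b ha hb hab
      simp only [Set.mem_ofPred_eq, Pi.add_apply, Pi.smul_apply, smul_eq_mul]
      refine ⟨by positivity, ?_, ?_⟩ <;> nlinarith [mul_le_mul_of_nonneg_left hu₂ ha,
        mul_le_mul_of_nonneg_left hv₂ hb, mul_le_mul_of_nonneg_left hu₃ ha,
        mul_le_mul_of_nonneg_left hv₃ hb]
  · rintro ⟨h₁, h₂, h₃⟩
    -- solve `y = β • ![1, (p - 1) / p] + γ • ![p, 0]`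
    set β := p * y 1 / (p - 1) with hβ_def
    set γ := (y 0 - β) / p with hγ_def
    have hβ : 0 ≤ β := by positivity
    have hγ : 0 ≤ γ := div_nonneg (by rw [sub_nonneg, div_le_iff₀ hp₁]; linarith) hp₀.le
    have hβγ : β + γ ≤ 1 := by
      have hsum : β + γ = (y 0 + p * y 1) / p := by rw [hγ_def, hβ_def]; field_simp; ring
      rwa [hsum, div_le_one hp₀]
    refine mem_convexHull_of_exists_fintype ![1 - β - γ, β, γ]
      ![![0, 0], ![1, (p - 1) / p], ![p, 0]] ?_ ?_ ?_ ?_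
    · intro i; fin_cases i
      exacts [by simp only [Fin.zero_eta, Matrix.cons_val_zero]; linarith, hβ, hγ]
    · simp only [Fin.sum_univ_three, Matrix.cons_val_zero, Matrix.cons_val_one,
        Matrix.cons_val_two, Matrix.tail_cons, Matrix.head_cons]
      ring
    · intro i; fin_cases i <;> simp
    · ext j
      fin_cases j <;>
        simp only [Fin.sum_univ_three, Finset.sum_apply, Pi.smul_apply, smul_eq_mul,
          Matrix.cons_val, Matrix.cons_val_zero, Matrix.cons_val_one, Fin.zero_eta, Fin.mk_one,
          hβ_def, hγ_def] <;>
        field_simp <;> ring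

theorem mem_smul_convexHull_triangle {p t : ℝ} (hp : 1 < p) (ht : 0 < t) {x : Fin 2 → ℝ} :
    x ∈ t • convexHull ℝ ({![0, 0], ![1, (p - 1) / p], ![p, 0]} : Set (Fin 2 → ℝ)) ↔
      0 ≤ x 1 ∧ p * x 1 ≤ (p - 1) * x 0 ∧ x 0 + p * x 1 ≤ t * p := by
  rw [Set.mem_smul_set_iff_inv_smul_mem₀ ht.ne', mem_convexHull_triangle hp]
  simp only [Pi.smul_apply, smul_eq_mul]
  have ht' : 0 < t⁻¹ := inv_pos.2 ht
  refine and_congr (mul_nonneg_iff_of_pos_left ht') (and_congr ?_ ?_)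
  · rw [mul_left_comm, mul_left_comm _ t⁻¹, mul_le_mul_iff_right₀ ht']
  · rw [mul_left_comm, ← mul_add, inv_mul_le_iff₀ ht]

theorem exists_natCast_eq_of_intCast_eq {r : ℝ} (hr : 0 ≤ r) (h : ∃ m : ℤ, (m : ℝ) = r) :
    ∃ a : ℕ, (a : ℝ) = r := by
  obtain ⟨m, rfl⟩ := h
  lift m to ℕ using Int.cast_nonneg_iff.1 hr
  exact ⟨m, by simp⟩

theorem natCast_pair_injective : Function.Injective fun q : ℕ × ℕ ↦ ![(q.1 : ℝ), q.2] :=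
  fun q r h ↦ Prod.ext (by simpa using congrFun h 0) (by simpa using congrFun h 1)

theorem filter_range_mul_le_eq_range {p m N : ℕ} (hp : 0 < p) (hm : m / p < N) :
    {b ∈ range N | p * b ≤ m} = range (m / p + 1) := by
  ext b
  simp only [mem_filter, mem_range, Nat.lt_succ_iff, Nat.le_div_iff_mul_le hp, mul_comm b]
  constructor
  · exact And.right
  · intro h
    exact ⟨lt_of_le_of_lt ((Nat.le_div_iff_mul_le hp).2 (by rwa [mul_comm])) hm, h⟩

theorem sum_range_mul_div {p : ℕ} (hp : 0 < p) (n : ℕ) :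
    ∑ c ∈ range (n * p), c / p = p * ∑ q ∈ range n, q := by
  induction n with
  | zero => simp
  | succ n ih =>
    have hblock : ∀ r ∈ range p, (n * p + r) / p = n := fun r hr ↦ by
      rw [mul_comm, Nat.mul_add_div hp, Nat.div_eq_of_lt (mem_range.1 hr), add_zero]
    rw [add_mul, one_mul, sum_range_add, ih, sum_congr rfl hblock, sum_range_succ, sum_const,
      card_range, smul_eq_mul, mul_add]

theorem sum_range_tsub {m n : ℕ} (h : n ≤ m) :
    ∑ a ∈ range (m + 1), (n - a) = ∑ a ∈ range (n + 1), a := by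
  rw [← sum_subset (range_subset_range.2 (by omega : n + 1 ≤ m + 1))]
  · simpa using sum_range_reflect (fun a ↦ a) (n + 1)
  · intro a _ ha
    simp only [mem_range, not_lt] at ha
    omega

-- `p * b ≤ (p - 1) * a` is written as `p * b + a ≤ p * a` to avoid truncated subtraction
def triangleLatticePoints (p n : ℕ) : Finset (ℕ × ℕ) :=
  {q ∈ range (n * p + 1) ×ˢ range (n + 1) | p * q.2 + q.1 ≤ p * q.1 ∧ q.1 + p * q.2 ≤ n * p}

theorem mem_triangleLatticePoints {p n : ℕ} (hp : 0 < p) {q : ℕ × ℕ} :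
    q ∈ triangleLatticePoints p n ↔ p * q.2 + q.1 ≤ p * q.1 ∧ q.1 + p * q.2 ≤ n * p := by
  rw [triangleLatticePoints, mem_filter, mem_product, mem_range, mem_range, and_iff_right_iff_imp]
  rintro ⟨-, h⟩
  refine ⟨by omega, Nat.lt_succ_of_le (Nat.le_of_mul_le_mul_left ?_ hp)⟩
  rw [mul_comm p n]; omega

theorem card_column_add_tsub {p n a : ℕ} (hp : 0 < p) (ha : a ≤ n * p) :
    #{b ∈ range (n + 1) | p * b + a ≤ p * a ∧ a + p * b ≤ n * p} + (n - a) =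
      (n * p - a) / p + 1 := by
  have hap : a ≤ p * a := Nat.le_mul_of_pos_left a hp
  rcases le_total a n with han | hna
  · have hpa : p * a ≤ p * n := Nat.mul_le_mul_left p han
    have hcol : {b ∈ range (n + 1) | p * b + a ≤ p * a ∧ a + p * b ≤ n * p} =
        {b ∈ range (n + 1) | p * b ≤ p * a - a} :=
      filter_congr fun b _ ↦ by rw [mul_comm n]; omega
    have hsplit : n * p - a = p * a - a + p * (n - a) := by zify [ha, hap, han]; ring
    rw [hcol, filter_range_mul_le_eq_range hp, card_range, hsplit, Nat.add_mul_div_left _ _ hp]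
    · omega
    · exact Nat.lt_succ_of_le (Nat.div_le_of_le_mul (by omega))
  · have hpa : p * n ≤ p * a := Nat.mul_le_mul_left p hna
    have hcol : {b ∈ range (n + 1) | p * b + a ≤ p * a ∧ a + p * b ≤ n * p} =
        {b ∈ range (n + 1) | p * b ≤ n * p - a} :=
      filter_congr fun b _ ↦ by rw [mul_comm n] at *; omega
    rw [hcol, filter_range_mul_le_eq_range hp, card_range, Nat.sub_eq_zero_of_le hna, add_zero]
    exact Nat.lt_succ_of_le (Nat.div_le_of_le_mul (by rw [mul_comm n]; omega))

theorem card_triangleLatticePoints_eq_sum_card_column (p n : ℕ) :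
    #(triangleLatticePoints p n) = ∑ a ∈ range (n * p + 1),
      #{b ∈ range (n + 1) | p * b + a ≤ p * a ∧ a + p * b ≤ n * p} := by
  rw [triangleLatticePoints, card_filter, sum_product]
  simp_rw [card_filter]

theorem two_mul_card_triangleLatticePoints_add {p : ℕ} (hp : 0 < p) (n : ℕ) :
    2 * #(triangleLatticePoints p n) + n * (n + 1) = p * n * (n + 1) + 2 * (n + 1) := by
  have hreflect : ∑ a ∈ range (n * p + 1), ((n * p - a) / p + 1) =
      ∑ c ∈ range (n * p + 1), (c / p + 1) := by
    simpa using sum_range_reflect (fun c ↦ c / p + 1) (n * p + 1)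
  have hcols : #(triangleLatticePoints p n) + ∑ a ∈ range (n + 1), a =
      ∑ c ∈ range (n * p + 1), (c / p + 1) := by
    rw [card_triangleLatticePoints_eq_sum_card_column,
      ← sum_range_tsub (Nat.le_mul_of_pos_right n hp), ← sum_add_distrib, ← hreflect]
    exact sum_congr rfl fun a ha ↦ card_column_add_tsub hp (Nat.lt_succ_iff.1 (mem_range.1 ha))
  have hgauss := sum_range_id_mul_two (n + 1)
  have hsucc := sum_range_succ (fun i ↦ i) n
  rw [sum_add_distrib, sum_range_succ (fun c ↦ c / p), sum_range_mul_div hp,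
    Nat.mul_div_cancel _ hp, sum_const, card_range, smul_eq_mul, mul_one] at hcols
  rw [Nat.add_sub_cancel] at hgauss
  zify at hcols hgauss hsucc ⊢
  linear_combination 2 * hcols + (p - 1 : ℤ) * hgauss - 2 * (p : ℤ) * hsucc

theorem integerPoints_smul_triangle_eq_image {p n : ℕ} (hp : 2 ≤ p) (hn : 0 < n) :
    {x : Fin 2 → ℝ | x ∈ (n : ℝ) • convexHull ℝ
        ({![0, 0], ![1, ((p : ℝ) - 1) / p], ![(p : ℝ), 0]} : Set (Fin 2 → ℝ)) ∧
      ∀ j, ∃ m : ℤ, (m : ℝ) = x j} =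
      (fun q : ℕ × ℕ ↦ ![(q.1 : ℝ), q.2]) '' triangleLatticePoints p n := by
  have hp₁ : (1 : ℝ) < p := by exact_mod_cast hp
  ext x
  simp only [Set.mem_ofPred_eq, mem_smul_convexHull_triangle hp₁ (Nat.cast_pos.2 hn),
    Set.mem_image, mem_coe, mem_triangleLatticePoints (by omega : 0 < p)]
  constructor
  · rintro ⟨⟨h₁, h₂, h₃⟩, hint⟩
    have h₀ : 0 ≤ x 0 := by nlinarith
    obtain ⟨a, ha⟩ := exists_natCast_eq_of_intCast_eq h₀ (hint 0)
    obtain ⟨b, hb⟩ := exists_natCast_eq_of_intCast_eq h₁ (hint 1)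
    rw [← ha, ← hb] at h₂ h₃
    refine ⟨(a, b), ⟨?_, ?_⟩, ?_⟩
    · exact_mod_cast (by linarith : (p : ℝ) * b + a ≤ p * a)
    · exact_mod_cast h₃
    · ext j; fin_cases j
      exacts [ha, hb]
  · rintro ⟨⟨a, b⟩, ⟨hab₁, hab₂⟩, rfl⟩
    have hab₁' : (p : ℝ) * b + a ≤ p * a := by exact_mod_cast hab₁
    refine ⟨⟨?_, ?_, ?_⟩, ?_⟩ <;> simp only [Matrix.cons_val_zero, Matrix.cons_val_one]
    · positivity
    · linarith
    · exact_mod_cast hab₂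
    · intro j; fin_cases j
      exacts [⟨a, by simp⟩, ⟨b, by simp⟩]

/-- Period collapse: for the triangle `Δ = conv{(0,0), (1,(p-1)/p), (p,0)}` with integer
`p ≥ 2` and any positive integer `n`, the number of lattice points in `nΔ` equals
`((p-1)/2)n² + ((p+1)/2)n + 1`; in particular the Ehrhart counting function is a
polynomial in `n`. -/
theorem stmt13 (p : ℕ) (hp : 2 ≤ p) (n : ℕ) (hn : 0 < n) :
    (({x : Fin 2 → ℝ |
        x ∈ (n : ℝ) • convexHull ℝ
          ({![0, 0], ![1, ((p : ℝ) - 1) / p], ![(p : ℝ), 0]} : Set (Fin 2 → ℝ)) ∧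
        ∀ j, ∃ m : ℤ, (m : ℝ) = x j}).ncard : ℚ) =
      ((p : ℚ) - 1) / 2 * n ^ 2 + ((p : ℚ) + 1) / 2 * n + 1 := by
  rw [integerPoints_smul_triangle_eq_image hp hn,
    Set.ncard_image_of_injective _ natCast_pair_injective, Set.ncard_coe_finset]
  have hcount : (2 * #(triangleLatticePoints p n) + n * (n + 1) : ℚ) =
      p * n * (n + 1) + 2 * (n + 1) := by
    exact_mod_cast two_mul_card_triangleLatticePoints_add (by omega) n
  linear_combination hcount / 2
end

section
/- For the triangle Δ = conv{(0,0), (1, 2/3), (3, 0)}, the generating function Σ_{n≥0} |(n/3)Δ ∩ ℤ²| t^n equals (1 + t^5)/((1-t)^2 (1-t^9)). -/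
open Pointwise

open PowerSeries

/-!
Δ is cut out by `0 ≤ y`, `3y ≤ 2x`, `x + 3y ≤ 3`, so the lattice points of `(n/3)Δ` are those
with `0 ≤ y`, `3y ≤ 2x`, `x + 3y ≤ n`. Passing from `n - 1` to `n` adds the points on the line
`x + 3y = n`, namely `(n - 3y, y)` for `0 ≤ y ≤ ⌊2n/9⌋`; hence `(1 - t)` times the generating
function is `Σ (⌊2n/9⌋ + 1) tⁿ`. Since `⌊2(n + 9)/9⌋ = ⌊2n/9⌋ + 2`, multiplying by `1 - t⁹` and
once more by `1 - t` leaves the polynomial `1 + t⁵`.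
-/

theorem one_sub_X_pow_mul_mk {R : Type*} [CommRing R] (k : ℕ) (f : ℕ → R) :
    (1 - X ^ k) * mk f = mk fun n => if n < k then f n else f n - f (n - k) := by
  ext n
  rw [sub_mul, one_mul, map_sub, coeff_X_pow_mul', coeff_mk, coeff_mk, coeff_mk]
  split_ifs <;> first | omega | simp

theorem one_sub_X_mul_mk {R : Type*} [CommRing R] (f : ℕ → R) :
    (1 - X) * mk f = mk fun n => if n = 0 then f 0 else f n - f (n - 1) := by
  rw [← pow_one X, one_sub_X_pow_mul_mk]
  congr 1
  funext n
  split_ifs <;> first | rfl | omega | simp_all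

theorem one_sub_X_mul_one_sub_X_pow_nine_mul_mk_div_nine :
    (1 - X) * (1 - X ^ 9) * mk (fun n => ((2 * n / 9 : ℕ) : ℤ) + 1) = 1 + X ^ 5 := by
  rw [mul_assoc, one_sub_X_pow_mul_mk, one_sub_X_mul_mk]
  ext n
  simp only [coeff_mk, map_add, coeff_one, coeff_X_pow]
  rcases lt_or_ge n 10 with h | h
  · interval_cases n <;> rfl
  · split_ifs <;> omega

theorem convexHull_triangle :
    convexHull ℝ ({![0, 0], ![1, 2 / 3], ![3, 0]} : Set (Fin 2 → ℝ)) =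
      {q | 0 ≤ q 1 ∧ 3 * q 1 ≤ 2 * q 0 ∧ q 0 + 3 * q 1 ≤ 3} := by
  apply subset_antisymm
  · refine convexHull_min ?_ ?_
    · rintro v (rfl | rfl | rfl) <;> norm_num
    · rintro x ⟨hx₁, hx₂, hx₃⟩ y ⟨hy₁, hy₂, hy₃⟩ a b ha hb hab
      simp only [Set.mem_ofPred_eq, Pi.add_apply, Pi.smul_apply, smul_eq_mul]
      exact ⟨by positivity, by nlinarith, by nlinarith⟩
  · rintro q ⟨h₁, h₂, h₃⟩
    -- barycentric coordinates of `q`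
    let w : Fin 3 → ℝ := ![1 - q 0 / 3 - q 1, 3 * q 1 / 2, (2 * q 0 - 3 * q 1) / 6]
    let z : Fin 3 → Fin 2 → ℝ := ![![0, 0], ![1, 2 / 3], ![3, 0]]
    have hq : q = ∑ i, w i • z i := by
      ext j; fin_cases j <;> simp [w, z, Fin.sum_univ_three] <;> ring
    rw [hq]
    refine (convex_convexHull ℝ _).sum_mem (fun i _ => ?_) ?_
      (fun i _ => subset_convexHull ℝ _ ?_)
    · fin_cases i <;> simp [w] <;> linarith
    · simp only [Fin.sum_univ_three, Matrix.cons_val_zero, Matrix.cons_val_one, Matrix.cons_val, w]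
      ring
    · fin_cases i <;> simp [z]

theorem mem_smul_triangle_iff {c : ℝ} (hc : 0 ≤ c) (q : Fin 2 → ℝ) :
    q ∈ c • {q : Fin 2 → ℝ | 0 ≤ q 1 ∧ 3 * q 1 ≤ 2 * q 0 ∧ q 0 + 3 * q 1 ≤ 3} ↔
      0 ≤ q 1 ∧ 3 * q 1 ≤ 2 * q 0 ∧ q 0 + 3 * q 1 ≤ 3 * c := by
  constructor
  · rintro ⟨p, ⟨h₁, h₂, h₃⟩, rfl⟩
    simp only [Pi.smul_apply, smul_eq_mul]
    exact ⟨by positivity, by nlinarith, by nlinarith⟩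
  · rintro ⟨h₁, h₂, h₃⟩
    rcases hc.eq_or_lt with rfl | hc
    · refine ⟨0, by norm_num, ?_⟩
      ext j; fin_cases j <;> simp <;> linarith
    · refine ⟨c⁻¹ • q, ?_, smul_inv_smul₀ hc.ne' q⟩
      simp only [Set.mem_ofPred_eq, Pi.smul_apply, smul_eq_mul]
      have := inv_pos.2 hc
      refine ⟨by positivity, by nlinarith, ?_⟩
      rw [← mul_le_mul_iff_right₀ hc]
      field_simp
      linarith

noncomputable def latticeTriangle (n : ℕ) : Finset (Fin 2 → ℤ) :=
  (Fintype.piFinset fun _ => Finset.Icc 0 (n : ℤ)).filter fun x =>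
    0 ≤ x 1 ∧ 3 * x 1 ≤ 2 * x 0 ∧ x 0 + 3 * x 1 ≤ n

theorem mem_latticeTriangle {n : ℕ} {x : Fin 2 → ℤ} :
    x ∈ latticeTriangle n ↔ 0 ≤ x 1 ∧ 3 * x 1 ≤ 2 * x 0 ∧ x 0 + 3 * x 1 ≤ n := by
  simp only [latticeTriangle, Finset.mem_filter, Fintype.mem_piFinset, Finset.mem_Icc,
    Fin.forall_fin_two]
  omega

theorem latticeTriangle_zero : latticeTriangle 0 = {0} := by
  ext x
  simp only [mem_latticeTriangle, Finset.mem_singleton, funext_iff, Fin.forall_fin_two,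
    Pi.zero_apply, Nat.cast_zero]
  omega

theorem latticeTriangle_succ (n : ℕ) :
    latticeTriangle (n + 1) = latticeTriangle n ∪
      (Finset.Icc 0 (2 * (n + 1 : ℤ) / 9)).image fun y => ![n + 1 - 3 * y, y] := by
  ext x
  simp only [Finset.mem_union, Finset.mem_image, Finset.mem_Icc, mem_latticeTriangle, funext_iff,
    Fin.forall_fin_two]
  constructor
  · rintro ⟨h₁, h₂, h₃⟩
    by_cases h : x 0 + 3 * x 1 ≤ n
    · exact Or.inl ⟨h₁, h₂, h⟩
    · refine Or.inr ⟨x 1, by omega, ?_⟩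
      simp only [Matrix.cons_val_zero, Matrix.cons_val_one, Matrix.cons_val_fin_one, and_true]
      omega
  · rintro (⟨h₁, h₂, h₃⟩ | ⟨y, ⟨hy₀, hy⟩, h₀, h₁⟩)
    · omega
    · simp only [Matrix.cons_val_zero, Matrix.cons_val_one, Matrix.cons_val_fin_one] at h₀ h₁
      omega

theorem card_latticeTriangle_succ (n : ℕ) :
    (latticeTriangle (n + 1)).card = (latticeTriangle n).card + (2 * (n + 1) / 9 + 1) := by
  have hdisj : Disjoint (latticeTriangle n)
      ((Finset.Icc 0 (2 * (n + 1 : ℤ) / 9)).image fun y => ![n + 1 - 3 * y, y]) := by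
    simp only [Finset.disjoint_right, Finset.mem_image, mem_latticeTriangle]
    rintro _ ⟨y, -, rfl⟩
    simp
  have hinj : Function.Injective fun y : ℤ => ![(n + 1 : ℤ) - 3 * y, y] :=
    fun y y' h => congrFun h 1
  rw [latticeTriangle_succ, Finset.card_union_of_disjoint hdisj,
    Finset.card_image_of_injective _ hinj, Int.card_Icc]
  omega

theorem one_sub_X_mul_mk_card_latticeTriangle :
    (1 - X) * mk (fun n => ((latticeTriangle n).card : ℤ)) =
      mk fun n => ((2 * n / 9 : ℕ) : ℤ) + 1 := by
  rw [one_sub_X_mul_mk]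
  congr 1
  funext n
  rcases n with _ | n
  · simp [latticeTriangle_zero]
  · rw [if_neg n.succ_ne_zero, Nat.add_sub_cancel, card_latticeTriangle_succ]
    push_cast
    ring

/-- For the triangle `Δ = conv{(0,0),(1,2/3),(3,0)}`, the generating function
`Σₙ |(n/3)Δ ∩ ℤ²| tⁿ` equals `(1 + t⁵)/((1-t)²(1-t⁹))`. -/
theorem stmt14 :
    (1 - (X : ℤ⟦X⟧)) ^ 2 * (1 - X ^ 9) *
        PowerSeries.mk (fun n : ℕ =>
          (({x : Fin 2 → ℤ | (fun j => ((x j : ℤ) : ℝ)) ∈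
              ((n : ℝ) / 3) • convexHull ℝ
                ({![0, 0], ![1, 2 / 3], ![3, 0]} : Set (Fin 2 → ℝ))}).ncard : ℤ)) =
      1 + X ^ 5 := by
  have hcount (n : ℕ) :
      {x : Fin 2 → ℤ | (fun j => ((x j : ℤ) : ℝ)) ∈
          ((n : ℝ) / 3) • convexHull ℝ ({![0, 0], ![1, 2 / 3], ![3, 0]} : Set (Fin 2 → ℝ))} =
        latticeTriangle n := by
    ext x
    rw [Set.mem_ofPred_eq, convexHull_triangle, mem_smul_triangle_iff (by positivity),
      Finset.mem_coe, mem_latticeTriangle, mul_div_cancel₀ _ three_ne_zero]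
    exact_mod_cast Iff.rfl
  simp_rw [hcount, Set.ncard_coe_finset]
  calc (1 - X) ^ 2 * (1 - X ^ 9) * mk (fun n => ((latticeTriangle n).card : ℤ))
      = (1 - X) * (1 - X ^ 9) * ((1 - X) * mk fun n => ((latticeTriangle n).card : ℤ)) := by
        ring
    _ = 1 + X ^ 5 := by
        rw [one_sub_X_mul_mk_card_latticeTriangle,
          one_sub_X_mul_one_sub_X_pow_nine_mul_mk_div_nine]
end

section
/- The cone C = {(x₀, x) ∈ ℝ² : x₀ ≥ 0, x₀ ≤ 8x, 2x ≤ x₀} over the segment [1/8, 1/2] is not Gorenstein: there is no lattice point q ∈ C° ∩ ℤ² with C° ∩ ℤ² = q + (C ∩ ℤ²). -/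
lemma cone_interior_sub {p : ℝ × ℝ} (h1 : p.1 < 8 * p.2) (h2 : 2 * p.2 < p.1) :
    p ∈ interior {p : ℝ × ℝ | 0 ≤ p.1 ∧ p.1 ≤ 8 * p.2 ∧ 2 * p.2 ≤ p.1} := by
  have hopen : IsOpen {p : ℝ × ℝ | p.1 < 8 * p.2 ∧ 2 * p.2 < p.1} :=
    IsOpen.inter (isOpen_lt continuous_fst (by continuity))
      (isOpen_lt (by continuity) continuous_fst)
  have hsub : {p : ℝ × ℝ | p.1 < 8 * p.2 ∧ 2 * p.2 < p.1} ⊆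
      {p : ℝ × ℝ | 0 ≤ p.1 ∧ p.1 ≤ 8 * p.2 ∧ 2 * p.2 ≤ p.1} := by
    rintro ⟨x, y⟩ ⟨ha, hb⟩
    exact ⟨by nlinarith, ha.le, hb.le⟩
  exact interior_maximal hsub hopen ⟨h1, h2⟩

lemma cone_interior_strict {q : ℝ × ℝ}
    (h : q ∈ interior {p : ℝ × ℝ | 0 ≤ p.1 ∧ p.1 ≤ 8 * p.2 ∧ 2 * p.2 ≤ p.1}) :
    q.1 < 8 * q.2 ∧ 2 * q.2 < q.1 := by
  rw [mem_interior_iff_mem_nhds, Metric.mem_nhds_iff] at h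
  obtain ⟨ε, hε, hball⟩ := h
  have hd : ∀ t : ℝ, dist ((q.1 + t, q.2)) q = |t| := by
    intro t
    rw [Prod.dist_eq]
    simp [Real.dist_eq]
  constructor
  · have hmem : (q.1 + ε/2, q.2) ∈ Metric.ball q ε := by
      rw [Metric.mem_ball, hd, abs_of_nonneg (by linarith)]
      linarith
    have := (hball hmem).2.1
    simp only at this
    linarith
  · have hmem : (q.1 + (-(ε/2)), q.2) ∈ Metric.ball q ε := by
      rw [Metric.mem_ball, hd, abs_of_nonpos (by linarith)]
      linarith
    have := (hball hmem).2.2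
    simp only at this
    linarith

/-- The cone `C = {(x₀,x) : x₀ ≥ 0, x₀ ≤ 8x, 2x ≤ x₀}` over the segment `[1/8, 1/2]`
is not Gorenstein: there is no lattice point `q ∈ C°` with
`C° ∩ ℤ² = q + (C ∩ ℤ²)`. -/
theorem stmt18 :
    ¬ ∃ q : ℤ × ℤ,
      ((q.1 : ℝ), (q.2 : ℝ)) ∈
          interior {p : ℝ × ℝ | 0 ≤ p.1 ∧ p.1 ≤ 8 * p.2 ∧ 2 * p.2 ≤ p.1} ∧
      {p ∈ interior {p : ℝ × ℝ | 0 ≤ p.1 ∧ p.1 ≤ 8 * p.2 ∧ 2 * p.2 ≤ p.1} |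
          (∃ m : ℤ, (m : ℝ) = p.1) ∧ ∃ m : ℤ, (m : ℝ) = p.2} =
        (fun p => ((q.1 : ℝ), (q.2 : ℝ)) + p) ''
          {p ∈ {p : ℝ × ℝ | 0 ≤ p.1 ∧ p.1 ≤ 8 * p.2 ∧ 2 * p.2 ≤ p.1} |
            (∃ m : ℤ, (m : ℝ) = p.1) ∧ ∃ m : ℤ, (m : ℝ) = p.2} := by
  rintro ⟨q, hq, hset⟩
  obtain ⟨hq1, hq2⟩ := cone_interior_strict hq
  simp only at hq1 hq2
  -- q.2 ≥ 1
  have hbR : (0:ℝ) < (q.2 : ℝ) := by linarith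
  have hbZ : (1:ℤ) ≤ q.2 := by exact_mod_cast hbR
  have hb : (1:ℝ) ≤ (q.2 : ℝ) := by exact_mod_cast hbZ
  -- (3,1) is an interior lattice point
  have h31 : ((3:ℝ), (1:ℝ)) ∈
      {p ∈ interior {p : ℝ × ℝ | 0 ≤ p.1 ∧ p.1 ≤ 8 * p.2 ∧ 2 * p.2 ≤ p.1} |
          (∃ m : ℤ, (m : ℝ) = p.1) ∧ ∃ m : ℤ, (m : ℝ) = p.2} :=
    ⟨cone_interior_sub (by norm_num) (by norm_num), ⟨3, by norm_num⟩, ⟨1, by norm_num⟩⟩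
  rw [hset] at h31
  obtain ⟨c, ⟨⟨hc0, hc1, hc2⟩, -⟩, heq⟩ := h31
  have e1 := congrArg Prod.fst heq
  have e2 := congrArg Prod.snd heq
  simp only [Prod.fst_add, Prod.snd_add] at e1 e2
  -- force q = (3,1)
  have hqa : (q.1 : ℝ) = 3 := by nlinarith
  have hqb : (q.2 : ℝ) = 1 := by nlinarith
  -- (5,1) is an interior lattice point
  have h51 : ((5:ℝ), (1:ℝ)) ∈
      {p ∈ interior {p : ℝ × ℝ | 0 ≤ p.1 ∧ p.1 ≤ 8 * p.2 ∧ 2 * p.2 ≤ p.1} |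
          (∃ m : ℤ, (m : ℝ) = p.1) ∧ ∃ m : ℤ, (m : ℝ) = p.2} :=
    ⟨cone_interior_sub (by norm_num) (by norm_num), ⟨5, by norm_num⟩, ⟨1, by norm_num⟩⟩
  rw [hset] at h51
  obtain ⟨d, ⟨⟨hd0, hd1, hd2⟩, -⟩, heq'⟩ := h51
  have f1 := congrArg Prod.fst heq'
  have f2 := congrArg Prod.snd heq'
  simp only [Prod.fst_add, Prod.snd_add] at f1 f2
  -- then d = (2,0) must lie in the cone: 2 ≤ 0, contradiction
  nlinarith
end
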